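/- Uniform-norm control of the Nikaido–Isoda error (Lemma C.1): Let f be continuous on 𝕋^n × 𝕋^n, and let μ_i = ρ_i dx and ν_i = η_i dx (i = 1, 2) be probability measures on 𝕋^n whose densities satisfy C₁^{−1} ≤ ρ_1, ρ_2, η_1, η_2 ≤ C₁ everywhere, for some constant C₁ ∈ [1, ∞). Then there exists a constant C, depending only on C₁ and on sup|f|, such that |NI(μ_1,ν_1) − NI(μ_2,ν_2)| ≤ C ( sup_{𝕋^n}|ρ_1 − ρ_2| + sup_{𝕋^n}|η_1 − η_2| ). -/

import Mathlib

open MeasureTheory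

attribute [local instance] ZeroLEOneClass.factZeroLtOne

/-- The flat torus `ℝⁿ/ℤⁿ`, modeled as a product of circles of length `1`, equipped with
its (probability) Haar/Lebesgue measure `volume`. -/
abbrev Torus (n : ℕ) := Fin n → AddCircle (1 : ℝ)

/-- The density of a measure on the torus with respect to the Lebesgue (probability) measure. -/
noncomputable def density {n : ℕ} (ν : Measure (Torus n)) : Torus n → ℝ :=
  fun x => (ν.rnDeriv volume x).toReal

/-- A measure has finite entropy `H(ν) = ∫ ρ log ρ dx < ∞` iff it is absolutely continuous with
respect to Lebesgue measure and `ρ log ρ` is integrable. -/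
def entAdmissible {n : ℕ} (ν : Measure (Torus n)) : Prop :=
  ν ≪ (volume : Measure (Torus n)) ∧
    Integrable (fun x => density ν x * Real.log (density ν x)) (volume : Measure (Torus n))

/-- The (negative) entropy `H(ν) = ∫ ρ log ρ dx` of an absolutely continuous measure. -/
noncomputable def Hent {n : ℕ} (ν : Measure (Torus n)) : ℝ :=
  ∫ x, density ν x * Real.log (density ν x)

open Classical in
/-- The payoff functional `F(μ,ν) = ∬ f dμ dν + H(μ) − H(ν)`, as an extended real number:
it equals `−∞ = ⊥` when `H(ν) = +∞` (and `H(μ) < ∞`), and `+∞ = ⊤` when `H(μ) = +∞`. -/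
noncomputable def Fval {n : ℕ} (f : Torus n → Torus n → ℝ) (μ ν : Measure (Torus n)) : EReal :=
  if entAdmissible μ then
    (if entAdmissible ν then (((∫ x, ∫ y, f x y ∂ν ∂μ) + Hent μ - Hent ν : ℝ) : EReal) else ⊥)
  else ⊤

/-- The Nikaido–Isoda error `NI(μ,ν) = sup_{ν'} F(μ,ν') − inf_{μ'} F(μ',ν)`, the suprema and
infima being taken over all Borel probability measures on the torus. -/
noncomputable def NIval {n : ℕ} (f : Torus n → Torus n → ℝ) (μ ν : Measure (Torus n)) : EReal :=
  (⨆ ν' ∈ {m : Measure (Torus n) | IsProbabilityMeasure m}, Fval f μ ν')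
    - (⨅ μ' ∈ {m : Measure (Torus n) | IsProbabilityMeasure m}, Fval f μ' ν)

/-!
On densities pinched between `C⁻¹` and `C`, the map `t ↦ t log t` is `(1 + log C)`-Lipschitz,
and replacing a density `ρ₁` by `ρ₂` changes the coupling term `∬ f` by at most
`sup |f| · sup |ρ₁ - ρ₂|`. Hence `F(·, ν')` and `F(μ', ·)` are Lipschitz in the sup norm of the
density, uniformly in the other player's measure, and so are their supremum over `ν'` and infimum
over `μ'`. These are finite: Gibbs' inequality `H ≥ 0` bounds them on one side, testing against
Lebesgue measure on the other.
-/

open Set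

instance : IsProbabilityMeasure (volume : Measure (AddCircle (1 : ℝ))) :=
  ⟨by simp [AddCircle.measure_univ]⟩

section RealBounds

variable {C : ℝ}

lemma abs_log_le_log_of_mem_Icc (hC : 0 < C) {t : ℝ} (ht : t ∈ Icc C⁻¹ C) :
    |Real.log t| ≤ Real.log C := by
  rw [abs_le, ← Real.log_inv]
  exact ⟨Real.log_le_log (inv_pos.2 hC) ht.1,
    Real.log_le_log ((inv_pos.2 hC).trans_le ht.1) ht.2⟩

lemma abs_mul_log_sub_mul_log_le (hC : 0 < C) {a b : ℝ} (ha : a ∈ Icc C⁻¹ C)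
    (hb : b ∈ Icc C⁻¹ C) :
    |a * Real.log a - b * Real.log b| ≤ (1 + Real.log C) * |a - b| := by
  have hderiv : ∀ x ∈ Icc C⁻¹ C,
      HasDerivWithinAt (fun t => t * Real.log t) (Real.log x + 1) (Icc C⁻¹ C) x :=
    fun x hx => (Real.hasDerivAt_mul_log ((inv_pos.2 hC).trans_le hx.1).ne').hasDerivWithinAt
  have hbound : ∀ x ∈ Icc C⁻¹ C, ‖Real.log x + 1‖ ≤ 1 + Real.log C := fun x hx =>
    (norm_add_le _ _).trans (by simpa [add_comm] using abs_log_le_log_of_mem_Icc hC hx)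
  simpa [Real.norm_eq_abs] using
    (convex_Icc _ _).norm_image_sub_le_of_norm_hasDerivWithin_le hderiv hbound hb ha

end RealBounds

section EReal

variable {ι : Type*} {s : Set ι} {a b : ι → EReal}

lemma EReal.biSup_le_biSup_add {ε : EReal} (h : ∀ i ∈ s, a i ≤ b i + ε) :
    ⨆ i ∈ s, a i ≤ (⨆ i ∈ s, b i) + ε :=
  iSup₂_le fun i hi =>
    (h i hi).trans (add_le_add_left (le_iSup₂ (f := fun i (_ : i ∈ s) => b i) i hi) ε)

lemma EReal.biInf_le_biInf_add {ε : ℝ} (h : ∀ i ∈ s, a i ≤ b i + ε) :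
    ⨅ i ∈ s, a i ≤ (⨅ i ∈ s, b i) + ε := by
  rw [← EReal.sub_le_iff_le_add (by simp) (by simp)]
  exact le_iInf₂ fun i hi => EReal.sub_le_of_le_add ((iInf₂_le i hi).trans (h i hi))

end EReal

section Pinched

variable {α : Type*} [MeasurableSpace α] {μ : Measure α} {C : ℝ}

structure IsPinched (C : ℝ) (ρ : α → ℝ) : Prop where
  measurable : Measurable ρ
  mem_Icc : ∀ x, ρ x ∈ Icc C⁻¹ C

namespace IsPinched

variable {ρ ρ₁ ρ₂ : α → ℝ}

lemma nonneg (hC : 0 < C) (hρ : IsPinched C ρ) (x : α) : 0 ≤ ρ x :=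
  (inv_pos.2 hC).le.trans (hρ.mem_Icc x).1

lemma abs_le (hC : 0 < C) (hρ : IsPinched C ρ) (x : α) : |ρ x| ≤ C := by
  rw [abs_of_nonneg (hρ.nonneg hC x)]
  exact (hρ.mem_Icc x).2

lemma abs_mul_log_le (hC : 0 < C) (hρ : IsPinched C ρ) (x : α) :
    |ρ x * Real.log (ρ x)| ≤ C * Real.log C := by
  rw [abs_mul]
  exact mul_le_mul (hρ.abs_le hC x) (abs_log_le_log_of_mem_Icc hC (hρ.mem_Icc x))
    (abs_nonneg _) hC.le

lemma integrable [IsFiniteMeasure μ] (hC : 0 < C) (hρ : IsPinched C ρ) : Integrable ρ μ :=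
  .of_bound hρ.measurable.aestronglyMeasurable C (ae_of_all _ (hρ.abs_le hC))

lemma integrable_mul_log [IsFiniteMeasure μ] (hC : 0 < C) (hρ : IsPinched C ρ) :
    Integrable (fun x => ρ x * Real.log (ρ x)) μ :=
  .of_bound (hρ.measurable.mul (Real.measurable_log.comp hρ.measurable)).aestronglyMeasurable
    (C * Real.log C) (ae_of_all _ (hρ.abs_mul_log_le hC))

lemma abs_sub_le_iSup (hC : 0 < C) (hρ₁ : IsPinched C ρ₁) (hρ₂ : IsPinched C ρ₂) (x : α) :
    |ρ₁ x - ρ₂ x| ≤ ⨆ y, |ρ₁ y - ρ₂ y| :=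
  le_ciSup ⟨C + C, forall_mem_range.2 fun y =>
    (abs_sub _ _).trans (add_le_add (hρ₁.abs_le hC y) (hρ₂.abs_le hC y))⟩ x

end IsPinched

end Pinched

section Integrals

variable {α : Type*} [MeasurableSpace α] {μ : Measure α} {g h : α → ℝ} {M : ℝ}

lemma abs_integral_le_of_forall_abs_le [IsProbabilityMeasure μ] (hg : ∀ x, |g x| ≤ M) :
    |∫ x, g x ∂μ| ≤ M := by
  simpa using norm_integral_le_of_norm_le_const (μ := μ)
    (ae_of_all _ fun x => (Real.norm_eq_abs _).trans_le (hg x))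

lemma abs_integral_sub_le_of_forall_abs_sub_le [IsProbabilityMeasure μ] (hg : Integrable g μ)
    (hh : Integrable h μ) (hgh : ∀ x, |g x - h x| ≤ M) :
    |∫ x, g x ∂μ - ∫ x, h x ∂μ| ≤ M := by
  rw [← integral_sub hg hh]
  exact abs_integral_le_of_forall_abs_le hgh

noncomputable abbrev MeasureTheory.Measure.withRealDensity (μ : Measure α) (ρ : α → ℝ) : Measure α :=
  μ.withDensity fun x => ENNReal.ofReal (ρ x)

lemma integral_withRealDensity {ρ : α → ℝ} (hρ : Measurable ρ) (h0 : ∀ x, 0 ≤ ρ x) (g : α → ℝ) :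
    ∫ x, g x ∂μ.withRealDensity ρ = ∫ x, ρ x * g x ∂μ := by
  rw [integral_withDensity_eq_integral_toReal_smul hρ.ennreal_ofReal
    (ae_of_all _ fun _ => ENNReal.ofReal_lt_top)]
  simp [ENNReal.toReal_ofReal (h0 _)]

lemma abs_integral_withRealDensity_sub_le [IsProbabilityMeasure μ] {B : ℝ} {ρ₁ ρ₂ : α → ℝ}
    (hC : 0 < C) (hρ₁ : IsPinched C ρ₁) (hρ₂ : IsPinched C ρ₂)
    (hg : AEStronglyMeasurable g μ) (hgB : ∀ x, |g x| ≤ B) :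
    |∫ x, g x ∂μ.withRealDensity ρ₁ - ∫ x, g x ∂μ.withRealDensity ρ₂|
      ≤ (⨆ x, |ρ₁ x - ρ₂ x|) * B := by
  have hgB' : ∀ᵐ x ∂μ, ‖g x‖ ≤ B := ae_of_all _ fun x => (Real.norm_eq_abs _).trans_le (hgB x)
  rw [integral_withRealDensity hρ₁.measurable (hρ₁.nonneg hC),
    integral_withRealDensity hρ₂.measurable (hρ₂.nonneg hC)]
  refine abs_integral_sub_le_of_forall_abs_sub_le ((hρ₁.integrable hC).mul_bdd hg hgB')
    ((hρ₂.integrable hC).mul_bdd hg hgB') fun x => ?_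
  have hd := hρ₁.abs_sub_le_iSup hC hρ₂ x
  rw [← sub_mul, abs_mul]
  exact mul_le_mul hd (hgB x) (abs_nonneg _) ((abs_nonneg _).trans hd)

end Integrals

section Entropy

variable {n : ℕ} {C : ℝ} {ρ ρ₁ ρ₂ : Torus n → ℝ}

lemma density_withRealDensity (hρ : Measurable ρ) (h0 : ∀ x, 0 ≤ ρ x) :
    density (volume.withRealDensity ρ) =ᵐ[volume] ρ := by
  filter_upwards [Measure.rnDeriv_withDensity (volume : Measure (Torus n)) hρ.ennreal_ofReal]
    with x hx
  simp only [density, hx, ENNReal.toReal_ofReal (h0 x)]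

lemma Hent_withRealDensity (hρ : Measurable ρ) (h0 : ∀ x, 0 ≤ ρ x) :
    Hent (volume.withRealDensity ρ) = ∫ x, ρ x * Real.log (ρ x) := by
  refine integral_congr_ae ?_
  filter_upwards [density_withRealDensity hρ h0] with x hx
  rw [hx]

lemma entAdmissible_withRealDensity (hC : 0 < C) (hρ : IsPinched C ρ) :
    entAdmissible (volume.withRealDensity ρ) := by
  refine ⟨withDensity_absolutelyContinuous _ _, (hρ.integrable_mul_log hC).congr ?_⟩
  filter_upwards [density_withRealDensity hρ.measurable (hρ.nonneg hC)] with x hx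
  rw [hx]

lemma abs_Hent_withRealDensity_sub_le (hC : 0 < C) (hρ₁ : IsPinched C ρ₁)
    (hρ₂ : IsPinched C ρ₂) :
    |Hent (volume.withRealDensity ρ₁) - Hent (volume.withRealDensity ρ₂)|
      ≤ (1 + Real.log C) * ⨆ x, |ρ₁ x - ρ₂ x| := by
  rw [Hent_withRealDensity hρ₁.measurable (hρ₁.nonneg hC),
    Hent_withRealDensity hρ₂.measurable (hρ₂.nonneg hC)]
  refine abs_integral_sub_le_of_forall_abs_sub_le (hρ₁.integrable_mul_log hC)
    (hρ₂.integrable_mul_log hC) fun x => ?_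
  have hlog : 0 ≤ 1 + Real.log C := by
    linarith [(abs_nonneg _).trans (abs_log_le_log_of_mem_Icc hC (hρ₁.mem_Icc x))]
  exact (abs_mul_log_sub_mul_log_le hC (hρ₁.mem_Icc x) (hρ₂.mem_Icc x)).trans
    (mul_le_mul_of_nonneg_left (hρ₁.abs_sub_le_iSup hC hρ₂ x) hlog)

lemma density_volume : density (volume : Measure (Torus n)) =ᵐ[volume] 1 := by
  filter_upwards [Measure.rnDeriv_self (volume : Measure (Torus n))] with x hx
  simp [density, hx]

lemma mul_log_density_volume :
    (fun x => density (volume : Measure (Torus n)) x *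
      Real.log (density (volume : Measure (Torus n)) x)) =ᵐ[volume] 0 := by
  filter_upwards [density_volume] with x hx
  simp [hx]

lemma entAdmissible_volume : entAdmissible (volume : Measure (Torus n)) :=
  ⟨.rfl, (integrable_congr mul_log_density_volume).2 (integrable_zero _ _ _)⟩

lemma Hent_volume : Hent (volume : Measure (Torus n)) = 0 := by
  rw [Hent, integral_congr_ae mul_log_density_volume]
  simp

/-- Gibbs' inequality: integrate `t - 1 ≤ t log t` against Lebesgue measure. -/
lemma Hent_nonneg {ν : Measure (Torus n)} [IsProbabilityMeasure ν] (hν : entAdmissible ν) :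
    0 ≤ Hent ν := by
  have hint : Integrable (density ν) volume := Measure.integrable_toReal_rnDeriv
  have hmass : ∫ x, density ν x = 1 := by
    simpa [density] using Measure.integral_toReal_rnDeriv hν.1
  calc (0 : ℝ) = ∫ x, (density ν x - 1) := by
        rw [integral_sub hint (integrable_const 1), hmass]; simp
    _ ≤ Hent ν := integral_mono (hint.sub (integrable_const 1)) hν.2 fun x =>
        Real.self_sub_one_le_mul_log ENNReal.toReal_nonneg

end Entropy

section Payoff

variable {n : ℕ} {f : Torus n → Torus n → ℝ} {B C : ℝ}

noncomputable def payoff (f : Torus n → Torus n → ℝ) (μ ν : Measure (Torus n)) : ℝ :=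
  (∫ x, ∫ y, f x y ∂ν ∂μ) + Hent μ - Hent ν

noncomputable def supFval (f : Torus n → Torus n → ℝ) (μ : Measure (Torus n)) : EReal :=
  ⨆ ν ∈ {m : Measure (Torus n) | IsProbabilityMeasure m}, Fval f μ ν

noncomputable def infFval (f : Torus n → Torus n → ℝ) (ν : Measure (Torus n)) : EReal :=
  ⨅ μ ∈ {m : Measure (Torus n) | IsProbabilityMeasure m}, Fval f μ ν

lemma NIval_eq_supFval_sub_infFval (μ ν : Measure (Torus n)) :
    NIval f μ ν = supFval f μ - infFval f ν := rfl

lemma Fval_of_entAdmissible {μ ν : Measure (Torus n)} (hμ : entAdmissible μ)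
    (hν : entAdmissible ν) : Fval f μ ν = payoff f μ ν := by
  rw [Fval, if_pos hμ, if_pos hν, payoff]

lemma abs_integral_integral_le (hB : ∀ x y, |f x y| ≤ B) (μ ν : Measure (Torus n))
    [IsProbabilityMeasure μ] [IsProbabilityMeasure ν] : |∫ x, ∫ y, f x y ∂ν ∂μ| ≤ B :=
  abs_integral_le_of_forall_abs_le fun x => abs_integral_le_of_forall_abs_le (hB x)

lemma exists_supFval_eq_coe (hB : ∀ x y, |f x y| ≤ B) {μ : Measure (Torus n)}
    [IsProbabilityMeasure μ] (hμ : entAdmissible μ) : ∃ s : ℝ, supFval f μ = s := by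
  have hle : supFval f μ ≤ ((B + Hent μ : ℝ) : EReal) := by
    refine iSup₂_le fun ν (hν : IsProbabilityMeasure ν) => ?_
    by_cases hνa : entAdmissible ν
    · rw [Fval_of_entAdmissible hμ hνa, EReal.coe_le_coe_iff, payoff]
      linarith [le_of_abs_le (abs_integral_integral_le hB μ ν), Hent_nonneg hνa]
    · simp [Fval, hμ, hνa]
  have hge : (payoff f μ volume : EReal) ≤ supFval f μ := by
    rw [← Fval_of_entAdmissible hμ entAdmissible_volume]
    exact le_iSup₂ (f := fun ν (_ : ν ∈ {m : Measure (Torus n) | IsProbabilityMeasure m}) =>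
      Fval f μ ν) volume (inferInstanceAs (IsProbabilityMeasure _))
  exact ⟨_, (EReal.coe_toReal (ne_top_of_le_ne_top (EReal.coe_ne_top _) hle)
    (ne_bot_of_le_ne_bot (EReal.coe_ne_bot _) hge)).symm⟩

lemma exists_infFval_eq_coe (hB : ∀ x y, |f x y| ≤ B) {ν : Measure (Torus n)}
    [IsProbabilityMeasure ν] (hν : entAdmissible ν) : ∃ i : ℝ, infFval f ν = i := by
  have hge : ((-B - Hent ν : ℝ) : EReal) ≤ infFval f ν := by
    refine le_iInf₂ fun μ (hμ : IsProbabilityMeasure μ) => ?_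
    by_cases hμa : entAdmissible μ
    · rw [Fval_of_entAdmissible hμa hν, EReal.coe_le_coe_iff, payoff]
      linarith [neg_le_of_abs_le (abs_integral_integral_le hB μ ν), Hent_nonneg hμa]
    · simp [Fval, hμa]
  have hle : infFval f ν ≤ (payoff f volume ν : EReal) := by
    rw [← Fval_of_entAdmissible entAdmissible_volume hν]
    exact iInf₂_le (f := fun μ (_ : μ ∈ {m : Measure (Torus n) | IsProbabilityMeasure m}) =>
      Fval f μ ν) volume (inferInstanceAs (IsProbabilityMeasure _))
  exact ⟨_, (EReal.coe_toReal (ne_top_of_le_ne_top (EReal.coe_ne_top _) hle)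
    (ne_bot_of_le_ne_bot (EReal.coe_ne_bot _) hge)).symm⟩

end Payoff

section Lipschitz

variable {n : ℕ} {f : Torus n → Torus n → ℝ} {B C : ℝ}

lemma supFval_le_supFval_add {μ₁ μ₂ : Measure (Torus n)} (hμ₁ : entAdmissible μ₁)
    (hμ₂ : entAdmissible μ₂) {ε : ℝ}
    (h : ∀ ν, IsProbabilityMeasure ν → entAdmissible ν → payoff f μ₁ ν ≤ payoff f μ₂ ν + ε) :
    supFval f μ₁ ≤ supFval f μ₂ + ε := by
  refine EReal.biSup_le_biSup_add fun ν hν => ?_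
  by_cases hνa : entAdmissible ν
  · rw [Fval_of_entAdmissible hμ₁ hνa, Fval_of_entAdmissible hμ₂ hνa]
    exact_mod_cast h ν hν hνa
  · simp [Fval, hμ₁, hνa]

lemma infFval_le_infFval_add {ν₁ ν₂ : Measure (Torus n)} (hν₁ : entAdmissible ν₁)
    (hν₂ : entAdmissible ν₂) {ε : ℝ}
    (h : ∀ μ, IsProbabilityMeasure μ → entAdmissible μ → payoff f μ ν₁ ≤ payoff f μ ν₂ + ε) :
    infFval f ν₁ ≤ infFval f ν₂ + ε := by
  refine EReal.biInf_le_biInf_add fun μ hμ => ?_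
  by_cases hμa : entAdmissible μ
  · rw [Fval_of_entAdmissible hμa hν₁, Fval_of_entAdmissible hμa hν₂]
    exact_mod_cast h μ hμ hμa
  · simp [Fval, hμa]

lemma abs_sub_le_of_supFval_eq {μ₁ μ₂ : Measure (Torus n)} (hμ₁ : entAdmissible μ₁)
    (hμ₂ : entAdmissible μ₂) {ε s₁ s₂ : ℝ}
    (h : ∀ ν, IsProbabilityMeasure ν → |payoff f μ₁ ν - payoff f μ₂ ν| ≤ ε)
    (hs₁ : supFval f μ₁ = s₁) (hs₂ : supFval f μ₂ = s₂) : |s₁ - s₂| ≤ ε := by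
  have h₁₂ := supFval_le_supFval_add hμ₁ hμ₂ fun ν hν _ => by linarith [(abs_le.1 (h ν hν)).2]
  have h₂₁ := supFval_le_supFval_add hμ₂ hμ₁ fun ν hν _ => by linarith [(abs_le.1 (h ν hν)).1]
  rw [hs₁, hs₂] at h₁₂ h₂₁
  exact abs_sub_le_iff.2 ⟨by linarith [EReal.coe_le_coe_iff.1 h₁₂],
    by linarith [EReal.coe_le_coe_iff.1 h₂₁]⟩

lemma abs_sub_le_of_infFval_eq {ν₁ ν₂ : Measure (Torus n)} (hν₁ : entAdmissible ν₁)
    (hν₂ : entAdmissible ν₂) {ε i₁ i₂ : ℝ}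
    (h : ∀ μ, IsProbabilityMeasure μ → |payoff f μ ν₁ - payoff f μ ν₂| ≤ ε)
    (hi₁ : infFval f ν₁ = i₁) (hi₂ : infFval f ν₂ = i₂) : |i₁ - i₂| ≤ ε := by
  have h₁₂ := infFval_le_infFval_add hν₁ hν₂ fun μ hμ _ => by linarith [(abs_le.1 (h μ hμ)).2]
  have h₂₁ := infFval_le_infFval_add hν₂ hν₁ fun μ hμ _ => by linarith [(abs_le.1 (h μ hμ)).1]
  rw [hi₁, hi₂] at h₁₂ h₂₁
  exact abs_sub_le_iff.2 ⟨by linarith [EReal.coe_le_coe_iff.1 h₁₂],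
    by linarith [EReal.coe_le_coe_iff.1 h₂₁]⟩

variable {ρ₁ ρ₂ η₁ η₂ : Torus n → ℝ}

lemma abs_payoff_withRealDensity_sub_left_le (hf : StronglyMeasurable (Function.uncurry f))
    (hB : ∀ x y, |f x y| ≤ B) (hC : 0 < C) (hρ₁ : IsPinched C ρ₁) (hρ₂ : IsPinched C ρ₂)
    (ν : Measure (Torus n)) [IsProbabilityMeasure ν] :
    |payoff f (volume.withRealDensity ρ₁) ν - payoff f (volume.withRealDensity ρ₂) ν|
      ≤ (B + (1 + Real.log C)) * ⨆ x, |ρ₁ x - ρ₂ x| := by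
  have hcoupling := abs_integral_withRealDensity_sub_le (μ := volume) hC hρ₁ hρ₂
    hf.integral_prod_right.aestronglyMeasurable
    fun x => abs_integral_le_of_forall_abs_le (μ := ν) (hB x)
  have hentropy := abs_Hent_withRealDensity_sub_le hC hρ₁ hρ₂
  unfold payoff
  refine (abs_le.2 ⟨?_, ?_⟩) <;>
    linarith [abs_le.1 hcoupling, abs_le.1 hentropy]

lemma abs_payoff_withRealDensity_sub_right_le (hf : StronglyMeasurable (Function.uncurry f))
    (hB : ∀ x y, |f x y| ≤ B) (hC : 0 < C) (hη₁ : IsPinched C η₁) (hη₂ : IsPinched C η₂)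
    [IsFiniteMeasure (volume.withRealDensity η₁)] [IsFiniteMeasure (volume.withRealDensity η₂)]
    (μ : Measure (Torus n)) [IsProbabilityMeasure μ] :
    |payoff f μ (volume.withRealDensity η₁) - payoff f μ (volume.withRealDensity η₂)|
      ≤ (B + (1 + Real.log C)) * ⨆ x, |η₁ x - η₂ x| := by
  have hswap : ∀ (ν : Measure (Torus n)) [IsFiniteMeasure ν],
      ∫ x, ∫ y, f x y ∂ν ∂μ = ∫ y, ∫ x, f x y ∂μ ∂ν := fun ν _ =>
    integral_integral_swap (.of_bound hf.aestronglyMeasurable B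
      (ae_of_all _ fun p => (Real.norm_eq_abs _).trans_le (hB p.1 p.2)))
  have hcoupling := abs_integral_withRealDensity_sub_le (μ := volume) hC hη₁ hη₂
    hf.integral_prod_left.aestronglyMeasurable
    fun y => abs_integral_le_of_forall_abs_le (μ := μ) fun x => hB x y
  have hentropy := abs_Hent_withRealDensity_sub_le hC hη₁ hη₂
  unfold payoff
  rw [hswap, hswap]
  refine (abs_le.2 ⟨?_, ?_⟩) <;>
    linarith [abs_le.1 hcoupling, abs_le.1 hentropy]

end Lipschitz

/-- **Uniform-norm control of the Nikaido–Isoda error.** Given `C₁ ∈ [1,∞)` and a bound `B` on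
`sup |f|`, there is a constant `C` (depending only on `C₁` and `B`) such that for all continuous
payoffs `f` bounded by `B` and all probability densities `ρ₁, ρ₂, η₁, η₂` pinched between
`C₁⁻¹` and `C₁`, the Nikaido–Isoda errors are finite and
`|NI(μ₁,ν₁) − NI(μ₂,ν₂)| ≤ C (sup|ρ₁−ρ₂| + sup|η₁−η₂|)`. -/
theorem stmt3 (n : ℕ) (C₁ : ℝ) (hC₁ : 1 ≤ C₁) (B : ℝ) :
    ∃ C : ℝ, ∀ f : Torus n → Torus n → ℝ,
      (Continuous fun p : Torus n × Torus n => f p.1 p.2) →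
      (∀ x y, |f x y| ≤ B) →
      ∀ ρ₁ ρ₂ η₁ η₂ : Torus n → ℝ,
      Measurable ρ₁ → Measurable ρ₂ → Measurable η₁ → Measurable η₂ →
      (∀ x, C₁⁻¹ ≤ ρ₁ x) → (∀ x, ρ₁ x ≤ C₁) →
      (∀ x, C₁⁻¹ ≤ ρ₂ x) → (∀ x, ρ₂ x ≤ C₁) →
      (∀ x, C₁⁻¹ ≤ η₁ x) → (∀ x, η₁ x ≤ C₁) →
      (∀ x, C₁⁻¹ ≤ η₂ x) → (∀ x, η₂ x ≤ C₁) →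
      IsProbabilityMeasure (volume.withDensity fun x => ENNReal.ofReal (ρ₁ x)) →
      IsProbabilityMeasure (volume.withDensity fun x => ENNReal.ofReal (ρ₂ x)) →
      IsProbabilityMeasure (volume.withDensity fun x => ENNReal.ofReal (η₁ x)) →
      IsProbabilityMeasure (volume.withDensity fun x => ENNReal.ofReal (η₂ x)) →
      ∃ r₁ r₂ : ℝ,
        NIval f (volume.withDensity fun x => ENNReal.ofReal (ρ₁ x))
              (volume.withDensity fun x => ENNReal.ofReal (η₁ x)) = (r₁ : EReal) ∧
        NIval f (volume.withDensity fun x => ENNReal.ofReal (ρ₂ x))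
              (volume.withDensity fun x => ENNReal.ofReal (η₂ x)) = (r₂ : EReal) ∧
        |r₁ - r₂| ≤ C * ((⨆ x, |ρ₁ x - ρ₂ x|) + (⨆ x, |η₁ x - η₂ x|)) := by
  refine ⟨B + (1 + Real.log C₁), fun f hf hB ρ₁ ρ₂ η₁ η₂ hmρ₁ hmρ₂ hmη₁ hmη₂ hloρ₁ hhiρ₁ hloρ₂
    hhiρ₂ hloη₁ hhiη₁ hloη₂ hhiη₂ _ _ _ _ => ?_⟩
  have hC : 0 < C₁ := zero_lt_one.trans_le hC₁
  have hf' : StronglyMeasurable (Function.uncurry f) := hf.stronglyMeasurable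
  have hρ₁ : IsPinched C₁ ρ₁ := ⟨hmρ₁, fun x => ⟨hloρ₁ x, hhiρ₁ x⟩⟩
  have hρ₂ : IsPinched C₁ ρ₂ := ⟨hmρ₂, fun x => ⟨hloρ₂ x, hhiρ₂ x⟩⟩
  have hη₁ : IsPinched C₁ η₁ := ⟨hmη₁, fun x => ⟨hloη₁ x, hhiη₁ x⟩⟩
  have hη₂ : IsPinched C₁ η₂ := ⟨hmη₂, fun x => ⟨hloη₂ x, hhiη₂ x⟩⟩
  have hadm : ∀ {ρ : Torus n → ℝ}, IsPinched C₁ ρ → entAdmissible (volume.withRealDensity ρ) :=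
    entAdmissible_withRealDensity hC
  obtain ⟨s₁, hs₁⟩ := exists_supFval_eq_coe (f := f) hB (hadm hρ₁)
  obtain ⟨s₂, hs₂⟩ := exists_supFval_eq_coe (f := f) hB (hadm hρ₂)
  obtain ⟨i₁, hi₁⟩ := exists_infFval_eq_coe (f := f) hB (hadm hη₁)
  obtain ⟨i₂, hi₂⟩ := exists_infFval_eq_coe (f := f) hB (hadm hη₂)
  have hs := abs_sub_le_of_supFval_eq (hadm hρ₁) (hadm hρ₂)
    (fun ν _ => abs_payoff_withRealDensity_sub_left_le hf' hB hC hρ₁ hρ₂ ν) hs₁ hs₂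
  have hi := abs_sub_le_of_infFval_eq (hadm hη₁) (hadm hη₂)
    (fun μ _ => abs_payoff_withRealDensity_sub_right_le hf' hB hC hη₁ hη₂ μ) hi₁ hi₂
  refine ⟨s₁ - i₁, s₂ - i₂, ?_, ?_, ?_⟩
  · rw [NIval_eq_supFval_sub_infFval, hs₁, hi₁, EReal.coe_sub]
  · rw [NIval_eq_supFval_sub_infFval, hs₂, hi₂, EReal.coe_sub]
  · rw [mul_add]
    exact abs_le.2 ⟨by linarith [abs_le.1 hs, abs_le.1 hi], by linarith [abs_le.1 hs, abs_le.1 hi]⟩
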